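/- arXiv:1403.4901 — 4 statements merged into one kernel-verified Lean document; each statement's English description precedes it below -/
import Mathlib

section
/- Let V be a finite-dimensional real inner product space and let A, B be linear endomorphisms of V such that A is normal, A + B is normal, and A and B commute (A ∘ B = B ∘ A). Then B is normal: B ∘ B† = B† ∘ B. -/
/-!
Fuglede's theorem in finite dimension: for `D = A†B - BA†`, cyclicity of the trace together with
`AA† = A†A` and `AB = BA` gives `tr (D†D) = 0`, so `D = 0`. Then `A†B = BA†` and its adjoint
`B†A = AB†` cancel all cross terms in the normality of `A + B`, leaving `BB† = B†B`.
-/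

theorem Commute.isStarNormal_of_isStarNormal_add {R : Type*} [NonUnitalRing R] [StarRing R]
    {a b : R} (hab : Commute (star a) b) [ha : IsStarNormal a] [hsum : IsStarNormal (a + b)] :
    IsStarNormal b := by
  have hba : Commute a (star b) := by simpa using hab.star_star
  refine ⟨Eq.symm ?_⟩
  calc b * star b = (a + b) * star (a + b) - a * star a - a * star b - b * star a := by
        simp only [star_add]; noncomm_ring
    _ = star (a + b) * (a + b) - star a * a - star b * a - star a * b := by
        rw [hsum.star_comm_self.eq, ha.star_comm_self.eq, hab.eq, hba.eq]
    _ = star b * b := by simp only [star_add]; noncomm_ring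

namespace LinearMap

variable {𝕜 E : Type*} [RCLike 𝕜] [NormedAddCommGroup E] [InnerProductSpace 𝕜 E]
  [FiniteDimensional 𝕜 E]

theorem trace_star_mul_self_eq_zero_iff {T : E →ₗ[𝕜] E} :
    trace 𝕜 E (star T * T) = 0 ↔ T = 0 := by
  refine ⟨fun h ↦ ?_, fun h ↦ by simp [h]⟩
  let b := stdOrthonormalBasis 𝕜 E
  have hsum : trace 𝕜 E (star T * T) = ((∑ i, ‖T (b i)‖ ^ 2 : ℝ) : 𝕜) := by
    simp [trace_eq_sum_inner _ b, star_eq_adjoint, adjoint_inner_right, inner_self_eq_norm_sq_to_K]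
  rw [hsum, RCLike.ofReal_eq_zero,
    Finset.sum_eq_zero_iff_of_nonneg fun i _ ↦ sq_nonneg _] at h
  exact b.toBasis.ext fun i ↦ by simpa using h i (Finset.mem_univ i)

theorem commute_star_left_of_isStarNormal {A B : E →ₗ[𝕜] E} [hA : IsStarNormal A]
    (h : Commute A B) : Commute (star A) B := by
  set D := star A * B - B * star A
  have hA' := hA.star_comm_self.eq
  have h₁ : trace 𝕜 E (A * star B * star A * B) = trace 𝕜 E (star B * A * star A * B) :=
    calc _ = trace 𝕜 E (star B * star A * B * A) := by
          rw [mul_assoc, mul_assoc, trace_mul_comm]; simp only [mul_assoc]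
      _ = trace 𝕜 E (star B * (star A * A) * B) := by simp only [mul_assoc, ← h.eq]
      _ = _ := by rw [hA']; simp only [mul_assoc]
  have h₂ : trace 𝕜 E (A * star B * B * star A) = trace 𝕜 E (star B * A * B * star A) :=
    calc _ = trace 𝕜 E (star B * B * (star A * A)) := by
          rw [mul_assoc, mul_assoc, trace_mul_comm]; simp only [mul_assoc]
      _ = trace 𝕜 E (star B * (B * A) * star A) := by rw [hA']; simp only [mul_assoc]
      _ = _ := by rw [← h.eq]; simp only [mul_assoc]
  have hD : star D * D = star B * A * star A * B - star B * A * B * star A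
      - A * star B * star A * B + A * star B * B * star A := by
    simp only [D, star_sub, star_mul, star_star]; noncomm_ring
  rw [commute_iff_eq, ← sub_eq_zero, ← trace_star_mul_self_eq_zero_iff, hD]
  simp only [map_add, map_sub, h₁, h₂]
  ring

end LinearMap

/-- If `A` is normal, `A + B` is normal, and `A` and `B` commute, then
`B` is normal. -/
theorem normal_of_add_normal_of_commute
    {V : Type*} [NormedAddCommGroup V] [InnerProductSpace ℝ V] [FiniteDimensional ℝ V]
    (A B : V →ₗ[ℝ] V)
    (hA : A ∘ₗ LinearMap.adjoint A = LinearMap.adjoint A ∘ₗ A)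
    (hAB : (A + B) ∘ₗ LinearMap.adjoint (A + B) = LinearMap.adjoint (A + B) ∘ₗ (A + B))
    (hcomm : A ∘ₗ B = B ∘ₗ A) :
    B ∘ₗ LinearMap.adjoint B = LinearMap.adjoint B ∘ₗ B := by
  have : IsStarNormal A := ⟨hA.symm⟩
  have : IsStarNormal (A + B) := ⟨hAB.symm⟩
  have hB := (LinearMap.commute_star_left_of_isStarNormal hcomm).isStarNormal_of_isStarNormal_add
  exact hB.star_comm_self.eq.symm
end

section
/- Let V be a finite-dimensional real inner product space and let N, B be linear endomorphisms of V with N normal and B ∘ N = N ∘ B. Then B also commutes with the adjoint of N: B ∘ N† = N† ∘ B. -/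
/-!
For `T = B N* - N* B`, the relations `N* N = N N*` and `B N = N B` turn the two cross terms of
`tr (T T*)` into cyclic permutations of each other, so `tr (T T*) = 0`; since `tr (T T*)` is the sum
of `t * star t` over the entries `t` of `T`, this forces `T = 0`.
The argument is carried out for matrices and transported to operators through an orthonormal basis.
-/

namespace Matrix

variable {n R : Type*} [Fintype n] [CommRing R] [PartialOrder R] [StarRing R] [StarOrderedRing R]
  [NoZeroDivisors R]

theorem commute_star_right_of_isStarNormal {N B : Matrix n n R} (hN : IsStarNormal N)
    (h : Commute B N) : Commute B (star N) := by
  have hNN : star N * N = N * star N := hN.star_comm_self.eq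
  have h₁ : B * star N * N * star B = N * (B * star N * star B) := by
    rw [mul_assoc B, hNN, ← mul_assoc, h.eq]
    simp only [mul_assoc]
  have h₂ : star N * B * N * star B = N * (star N * B * star B) := by
    rw [mul_assoc (star N), h.eq, ← mul_assoc, hNN]
    simp only [mul_assoc]
  have hexpand : (B * star N - star N * B) * (B * star N - star N * B)ᴴ =
      B * star N * N * star B - B * star N * star B * N - star N * B * N * star B
        + star N * B * star B * N := by
    rw [← star_eq_conjTranspose, star_sub, star_mul, star_mul, star_star]
    noncomm_ring
  have htrace : ((B * star N - star N * B) * (B * star N - star N * B)ᴴ).trace = 0 := by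
    rw [hexpand, h₁, h₂, trace_add, trace_sub, trace_sub, trace_mul_comm N, trace_mul_comm N]
    ring
  exact sub_eq_zero.mp (trace_mul_conjTranspose_self_eq_zero_iff.mp htrace)

end Matrix

open scoped ComplexOrder in
theorem LinearMap.commute_star_right_of_isStarNormal {𝕜 E : Type*} [RCLike 𝕜]
    [NormedAddCommGroup E] [InnerProductSpace 𝕜 E] [FiniteDimensional 𝕜 E] {N B : E →ₗ[𝕜] E}
    (hN : IsStarNormal N) (h : Commute B N) : Commute B (star N) := by
  let e := toMatrixOrthonormal (stdOrthonormalBasis 𝕜 E)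
  have := Matrix.commute_star_right_of_isStarNormal (IsStarNormal.map e N) (h.map e)
  rw [← map_star] at this
  simpa using this.map e.symm

/-- finite-dimensional real Fuglede theorem: If `N` is normal and `B`
commutes with `N`, then `B` commutes with the adjoint of `N`. -/
theorem fuglede_finiteDimensional_real
    {V : Type*} [NormedAddCommGroup V] [InnerProductSpace ℝ V] [FiniteDimensional ℝ V]
    (N B : V →ₗ[ℝ] V)
    (hN : N ∘ₗ LinearMap.adjoint N = LinearMap.adjoint N ∘ₗ N)
    (hcomm : B ∘ₗ N = N ∘ₗ B) :
    B ∘ₗ LinearMap.adjoint N = LinearMap.adjoint N ∘ₗ B :=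
  (LinearMap.commute_star_right_of_isStarNormal ⟨hN.symm⟩ hcomm).eq
end

section
/- Let V be a finite-dimensional real inner product space, let λ < 0 be a real number, and let E, F be symmetric linear endomorphisms of V satisfying: (a) tr(E) > 0; (b) tr(F ∘ F) + λ · tr(F) ≤ 0; (c) tr(F ∘ E) ≥ −λ · tr(E); (d) tr(F ∘ E) = tr(F); and (e) tr(E ∘ E) = tr(E). Then F = −λ · E. -/
/-!
Put `μ = -λ > 0` and `G = F - μ E`, which is symmetric. Expanding, and using (d), (e), then (b) and (c),
`tr (G ∘ G) = tr F² - 2μ tr F + μ² tr E ≤ μ (μ tr E - tr F) ≤ 0`.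
For symmetric `G`, `tr (G ∘ G) = tr (G† ∘ G) = ∑ ‖G bᵢ‖²` over an orthonormal basis `b`, so `G = 0`.
-/

namespace LinearMap

theorem trace_sub_smul_comp_sub_smul {R M : Type*} [CommRing R] [AddCommGroup M] [Module R M]
    (E F : M →ₗ[R] M) (c : R) :
    trace R M ((F - c • E) ∘ₗ (F - c • E)) =
      trace R M (F ∘ₗ F) - 2 * c * trace R M (F ∘ₗ E) + c ^ 2 * trace R M (E ∘ₗ E) := by
  have hcomm : trace R M (E ∘ₗ F) = trace R M (F ∘ₗ E) := trace_mul_comm R E F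
  simp only [sub_comp, comp_sub, smul_comp, comp_smul, map_sub, map_smul, hcomm, smul_eq_mul]
  ring

section HilbertSchmidt

variable {𝕜 E ι : Type*} [RCLike 𝕜] [NormedAddCommGroup E] [InnerProductSpace 𝕜 E]
  [FiniteDimensional 𝕜 E]

theorem trace_adjoint_comp_self_eq_sum [Fintype ι] (T : E →ₗ[𝕜] E) (b : OrthonormalBasis ι 𝕜 E) :
    trace 𝕜 E (adjoint T ∘ₗ T) = ∑ i, (‖T (b i)‖ ^ 2 : 𝕜) := by
  rw [trace_eq_sum_inner _ b]
  simp [adjoint_inner_right, inner_self_eq_norm_sq_to_K]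

theorem eq_zero_of_re_trace_adjoint_comp_self_nonpos (T : E →ₗ[𝕜] E)
    (h : RCLike.re (trace 𝕜 E (adjoint T ∘ₗ T)) ≤ 0) : T = 0 := by
  set b := stdOrthonormalBasis 𝕜 E
  have hsum : ∑ i, ‖T (b i)‖ ^ 2 ≤ 0 := by
    rw [trace_adjoint_comp_self_eq_sum T b, map_sum] at h
    simpa only [← RCLike.ofReal_pow, RCLike.ofReal_re] using h
  have hzero := (Finset.sum_eq_zero_iff_of_nonneg fun i _ ↦ sq_nonneg ‖T (b i)‖).mp
    (le_antisymm hsum (by positivity))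
  exact b.toBasis.ext fun i ↦ by simpa using hzero i (Finset.mem_univ i)

end HilbertSchmidt

end LinearMap

theorem symm_endo_eq_of_reverse_cauchy_schwarz_general
    {V : Type*} [NormedAddCommGroup V] [InnerProductSpace ℝ V] [FiniteDimensional ℝ V]
    (lam : ℝ) (hlam : lam < 0)
    (E F : V →ₗ[ℝ] V)
    (hE_symm : LinearMap.adjoint E = E)
    (hF_symm : LinearMap.adjoint F = F)
    (hb : LinearMap.trace ℝ V (F ∘ₗ F) + lam * LinearMap.trace ℝ V F ≤ 0)
    (hc : LinearMap.trace ℝ V (F ∘ₗ E) ≥ -lam * LinearMap.trace ℝ V E)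
    (hd : LinearMap.trace ℝ V (F ∘ₗ E) = LinearMap.trace ℝ V F)
    (he : LinearMap.trace ℝ V (E ∘ₗ E) = LinearMap.trace ℝ V E) :
    F = (-lam) • E := by
  set G := F - (-lam) • E
  have hG_symm : LinearMap.adjoint G = G := by simp [G, hE_symm, hF_symm]
  have hG : LinearMap.trace ℝ V (LinearMap.adjoint G ∘ₗ G) ≤ 0 := by
    have h := mul_le_mul_of_nonneg_left (hd ▸ hc) (neg_nonneg.mpr hlam.le)
    rw [hG_symm, LinearMap.trace_sub_smul_comp_sub_smul, hd, he]
    nlinarith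
  exact sub_eq_zero.mp (LinearMap.eq_zero_of_re_trace_adjoint_comp_self_nonpos G hG)

/-- a "reverse Cauchy–Schwarz" forcing linear dependence.  If `λ < 0`
and symmetric endomorphisms `E, F` of a finite-dimensional real inner product space
satisfy `tr E > 0`, `tr F² + λ tr F ≤ 0`, `tr(F E) ≥ -λ tr E`, `tr(F E) = tr F` and
`tr E² = tr E`, then `F = -λ E`. -/
theorem symm_endo_eq_of_reverse_cauchy_schwarz
    {V : Type*} [NormedAddCommGroup V] [InnerProductSpace ℝ V] [FiniteDimensional ℝ V]
    (lam : ℝ) (hlam : lam < 0)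
    (E F : V →ₗ[ℝ] V)
    (hE_symm : LinearMap.adjoint E = E)
    (hF_symm : LinearMap.adjoint F = F)
    (ha : 0 < LinearMap.trace ℝ V E)
    (hb : LinearMap.trace ℝ V (F ∘ₗ F) + lam * LinearMap.trace ℝ V F ≤ 0)
    (hc : LinearMap.trace ℝ V (F ∘ₗ E) ≥ -lam * LinearMap.trace ℝ V E)
    (hd : LinearMap.trace ℝ V (F ∘ₗ E) = LinearMap.trace ℝ V F)
    (he : LinearMap.trace ℝ V (E ∘ₗ E) = LinearMap.trace ℝ V E) :
    F = (-lam) • E :=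
  symm_endo_eq_of_reverse_cauchy_schwarz_general lam hlam E F hE_symm hF_symm hb hc hd he
end

section
/- Let V be a finite-dimensional real inner product space, let P be an orthogonal projection on V (i.e., P ∘ P = P and P† = P), set Q = 1 − P, and let S be a symmetric endomorphism of V. Then tr((P ∘ S ∘ P)²) + tr((Q ∘ S ∘ Q)²) ≤ tr(S ∘ S), with equality if and only if S commutes with P (S ∘ P = P ∘ S). -/
/-!
Write `Q = 1 - P`. Since `P + Q = 1`, `S² = (P + Q) S (P + Q) S` splits the trace of `S²` into
four terms `tr (E S F S)` with `E, F ∈ {P, Q}`, and by cyclicity `tr (E S F S)` is the trace of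
`(E S F) (F S E)`. Both mixed terms equal `tr (T† T)` for `T = Q S P`, so the defect of the
inequality is `2 tr (T† T) = 2 ‖T‖²_HS ≥ 0`, which vanishes iff `Q S P = 0`, i.e. iff `S`
commutes with `P`.
-/

open LinearMap

theorem IsStarProjection.one_sub_mul_mul_self_eq_zero_iff {R : Type*} [Ring R] [StarRing R]
    {p x : R} (hp : IsStarProjection p) (hx : IsSelfAdjoint x) :
    (1 - p) * x * p = 0 ↔ Commute x p := by
  have hpp : p * p = p := hp.isIdempotentElem
  rw [sub_mul, sub_mul, one_mul, sub_eq_zero, commute_iff_eq]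
  constructor
  · intro hxp
    have hpx : p * x = p * x * p := by
      simpa [star_mul, hx.star_eq, hp.isSelfAdjoint.star_eq, mul_assoc] using congr_arg star hxp
    exact hxp.trans hpx.symm
  · intro hcomm
    rw [mul_assoc, hcomm, ← mul_assoc, hpp]

section Trace

variable {R M : Type*} [CommRing R] [AddCommGroup M] [Module R M]

theorem LinearMap.trace_mul_mul_idempotent {E F : Module.End R M} (hE : IsIdempotentElem E)
    (hF : IsIdempotentElem F) (X Y : Module.End R M) :
    trace R M (E * X * F * F * Y * E) = trace R M (E * X * F * Y) := by
  rw [show E * X * F * F * Y * E = E * X * (F * F) * Y * E by noncomm_ring, hF.eq, trace_mul_comm,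
    show E * (E * X * F * Y) = E * E * X * F * Y by noncomm_ring, hE.eq]

theorem LinearMap.trace_comp_self_eq_add_compress {P : Module.End R M} (hP : IsIdempotentElem P)
    (S : Module.End R M) :
    trace R M (S ∘ₗ S) = trace R M ((P ∘ₗ S ∘ₗ P) ∘ₗ (P ∘ₗ S ∘ₗ P))
      + trace R M (((1 - P) ∘ₗ S ∘ₗ (1 - P)) ∘ₗ ((1 - P) ∘ₗ S ∘ₗ (1 - P)))
      + 2 * trace R M ((P ∘ₗ S ∘ₗ (1 - P)) ∘ₗ ((1 - P) ∘ₗ S ∘ₗ P)) := by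
  simp only [← Module.End.mul_eq_comp, ← mul_assoc]
  have hsplit : S * S = P * S * P * S + (1 - P) * S * (1 - P) * S + P * S * (1 - P) * S
      + (1 - P) * S * P * S := by noncomm_ring
  have hmixed : trace R M ((1 - P) * S * P * S) = trace R M (P * S * (1 - P) * S) := by
    rw [mul_assoc, trace_mul_comm, ← mul_assoc]
  rw [hsplit, map_add, map_add, map_add, hmixed, trace_mul_mul_idempotent hP hP,
    trace_mul_mul_idempotent hP.one_sub hP.one_sub, trace_mul_mul_idempotent hP hP.one_sub]
  ring

end Trace

section InnerProduct

variable {𝕜 E F : Type*} [RCLike 𝕜] [NormedAddCommGroup E] [InnerProductSpace 𝕜 E]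
  [FiniteDimensional 𝕜 E] [NormedAddCommGroup F] [InnerProductSpace 𝕜 F] [FiniteDimensional 𝕜 F]

theorem LinearMap.IsPositive.trace_eq_zero_iff {f : E →ₗ[𝕜] E} (hf : f.IsPositive) :
    trace 𝕜 E f = 0 ↔ f = 0 := by
  let b := (stdOrthonormalBasis 𝕜 E).toBasis
  rw [trace_eq_matrix_trace 𝕜 b,
    ((posSemidef_toMatrix_iff (stdOrthonormalBasis 𝕜 E)).mpr hf).trace_eq_zero_iff,
    ← map_zero (toMatrix b b), (toMatrix b b).injective.eq_iff]

theorem LinearMap.trace_adjoint_comp_self_eq_zero_iff (T : E →ₗ[𝕜] F) :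
    trace 𝕜 E (adjoint T ∘ₗ T) = 0 ↔ T = 0 := by
  rw [T.isPositive_adjoint_comp_self.trace_eq_zero_iff, ← ker_eq_top, ker_adjoint_comp_self,
    ker_eq_top]

end InnerProduct

/-- For an orthogonal projection `P` (with `Q = 1 - P`) and a symmetric
endomorphism `S` of a finite-dimensional real inner product space,
`tr((P S P)²) + tr((Q S Q)²) ≤ tr(S²)`, with equality if and only if `S` commutes
with `P`. -/
theorem trace_sq_compress_le_trace_sq
    {V : Type*} [NormedAddCommGroup V] [InnerProductSpace ℝ V] [FiniteDimensional ℝ V]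
    (P S : V →ₗ[ℝ] V)
    (hP_idem : P ∘ₗ P = P)
    (hP_symm : LinearMap.adjoint P = P)
    (hS_symm : LinearMap.adjoint S = S) :
    LinearMap.trace ℝ V ((P ∘ₗ S ∘ₗ P) ∘ₗ (P ∘ₗ S ∘ₗ P))
        + LinearMap.trace ℝ V
            (((1 - P) ∘ₗ S ∘ₗ (1 - P)) ∘ₗ ((1 - P) ∘ₗ S ∘ₗ (1 - P)))
      ≤ LinearMap.trace ℝ V (S ∘ₗ S)
    ∧ (LinearMap.trace ℝ V ((P ∘ₗ S ∘ₗ P) ∘ₗ (P ∘ₗ S ∘ₗ P))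
          + LinearMap.trace ℝ V
              (((1 - P) ∘ₗ S ∘ₗ (1 - P)) ∘ₗ ((1 - P) ∘ₗ S ∘ₗ (1 - P)))
        = LinearMap.trace ℝ V (S ∘ₗ S) ↔ S ∘ₗ P = P ∘ₗ S) := by
  have hP : IsStarProjection P := ⟨hP_idem, isSelfAdjoint_iff'.mpr hP_symm⟩
  have hS : IsSelfAdjoint S := isSelfAdjoint_iff'.mpr hS_symm
  have hT_adjoint : adjoint ((1 - P) ∘ₗ S ∘ₗ P) = P ∘ₗ S ∘ₗ (1 - P) := by
    simp only [← Module.End.mul_eq_comp, ← star_eq_adjoint, star_mul, hP.isSelfAdjoint.star_eq,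
      hS.star_eq, hP.one_sub.isSelfAdjoint.star_eq, mul_assoc]
  have hdefect := trace_comp_self_eq_add_compress hP.isIdempotentElem S
  rw [← hT_adjoint] at hdefect
  have hnonneg := (isPositive_adjoint_comp_self ((1 - P) ∘ₗ S ∘ₗ P)).trace_nonneg
  refine ⟨by linarith, ?_⟩
  have hcomm : S ∘ₗ P = P ∘ₗ S ↔ (1 - P) ∘ₗ S ∘ₗ P = 0 := by
    simpa only [commute_iff_eq, Module.End.mul_eq_comp, comp_assoc] using
      (hP.one_sub_mul_mul_self_eq_zero_iff hS).symm
  rw [hcomm, ← trace_adjoint_comp_self_eq_zero_iff]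
  constructor <;> intro h <;> linarith
end
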